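/- arXiv:1412.5302 — 2 statements merged into one kernel-verified Lean document; each statement's English description precedes it below -/
import Mathlib

section
/- Let L be any maximal layer on n channels. If there is a sorting network on n channels of depth d ≥ 1, then there is a sorting network on n channels of depth d whose first layer is L. -/
namespace SN

open scoped Classical

/-- A comparator on `n` channels: a pair of channels. -/
abbrev Comp (n : ℕ) := Fin n × Fin n

/-- A layer is a finite set of comparators. -/
abbrev Layer (n : ℕ) := Finset (Comp n)

/-- A comparator network is a sequence (list) of layers; its depth is the length. -/
abbrev Net (n : ℕ) := List (Layer n)

/-- Each channel is used by at most one comparator of the layer. -/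
def NoOverlap {n : ℕ} (L : Layer n) : Prop :=
  ∀ c ∈ L, ∀ c' ∈ L, c ≠ c' →
    c.1 ≠ c'.1 ∧ c.1 ≠ c'.2 ∧ c.2 ≠ c'.1 ∧ c.2 ≠ c'.2

/-- A (standard) layer: comparators `(i,j)` with `i < j`, channels pairwise disjoint. -/
def IsLayer {n : ℕ} (L : Layer n) : Prop :=
  (∀ c ∈ L, c.1 < c.2) ∧ NoOverlap L

/-- A generalized layer: comparators `(i,j)` with `i ≠ j` allowed in any order. -/
def IsGenLayer {n : ℕ} (L : Layer n) : Prop :=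
  (∀ c ∈ L, c.1 ≠ c.2) ∧ NoOverlap L

def IsNet {n : ℕ} (C : Net n) : Prop := ∀ L ∈ C, IsLayer L

def IsGenNet {n : ℕ} (C : Net n) : Prop := ∀ L ∈ C, IsGenLayer L

/-- Apply one layer to a Boolean vector: a comparator `(i,j)` puts the min
(`&&`) on channel `i` and the max (`||`) on channel `j`. -/
noncomputable def applyLayer {n : ℕ} (L : Layer n) (x : Fin n → Bool) : Fin n → Bool :=
  fun k =>
    if h1 : ∃ c ∈ L, c.1 = k then x h1.choose.1 && x h1.choose.2
    else if h2 : ∃ c ∈ L, c.2 = k then x h2.choose.1 || x h2.choose.2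
    else x k

/-- Run a comparator network on a Boolean input (layers applied in sequence). -/
noncomputable def run {n : ℕ} (C : Net n) (x : Fin n → Bool) : Fin n → Bool :=
  C.foldl (fun y L => applyLayer L y) x

/-- Ascendingly sorted Boolean vector. -/
def BSorted {n : ℕ} (x : Fin n → Bool) : Prop :=
  ∀ i j : Fin n, i ≤ j → x i ≤ x j

/-- A sorting network: a comparator network sorting every Boolean input. -/
def IsSortingNet {n : ℕ} (C : Net n) : Prop :=
  IsNet C ∧ ∀ x : Fin n → Bool, BSorted (run C x)

/-- The set of outputs of a network on all Boolean inputs. -/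
def outputs {n : ℕ} (C : Net n) : Set (Fin n → Bool) := Set.range (run C)

/-- Apply one layer to a vector of naturals. -/
noncomputable def applyLayerN {n : ℕ} (L : Layer n) (x : Fin n → ℕ) : Fin n → ℕ :=
  fun k =>
    if h1 : ∃ c ∈ L, c.1 = k then min (x h1.choose.1) (x h1.choose.2)
    else if h2 : ∃ c ∈ L, c.2 = k then max (x h2.choose.1) (x h2.choose.2)
    else x k

noncomputable def runN {n : ℕ} (C : Net n) (x : Fin n → ℕ) : Fin n → ℕ :=
  C.foldl (fun y L => applyLayerN L y) x

def NSorted {n : ℕ} (x : Fin n → ℕ) : Prop :=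
  ∀ i j : Fin n, i ≤ j → x i ≤ x j

/-- Permute the coordinates of a Boolean vector by `π` (channel `k`'s value
moves to channel `π k`). -/
def permVec {n : ℕ} (π : Equiv.Perm (Fin n)) (x : Fin n → Bool) : Fin n → Bool :=
  fun i => x (π.symm i)

/-- The image of a set of Boolean vectors under coordinate permutation by `π`. -/
def permSet {n : ℕ} (π : Equiv.Perm (Fin n)) (X : Set (Fin n → Bool)) :
    Set (Fin n → Bool) :=
  permVec π '' X

/-- The image `π(L)` of a layer under a permutation of channels. -/
def permLayer {n : ℕ} (π : Equiv.Perm (Fin n)) (L : Layer n) : Layer n :=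
  L.image fun c => (π c.1, π c.2)

/-- Channel `i` is used by some comparator of the layer `L`. -/
def usedIn {n : ℕ} (L : Layer n) (i : Fin n) : Prop := ∃ c ∈ L, c.1 = i ∨ c.2 = i

/-- Channels `i` and `j` are joined by a comparator of `L`. -/
def Joined {n : ℕ} (L : Layer n) (i j : Fin n) : Prop := (i, j) ∈ L ∨ (j, i) ∈ L

/-- `i` is the smaller channel of some comparator of `L` (a min-channel). -/
def MinChan {n : ℕ} (L : Layer n) (i : Fin n) : Prop := ∃ c ∈ L, c.1 = i

/-- `i` is the larger channel of some comparator of `L` (a max-channel). -/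
def MaxChan {n : ℕ} (L : Layer n) (i : Fin n) : Prop := ∃ c ∈ L, c.2 = i

/-- A two-layer network `[L1, L2]` is redundant if some comparator can be removed
so that the outputs of the result are a permutation of the original outputs. -/
def Redundant {n : ℕ} (L1 L2 : Layer n) : Prop :=
  ∃ π : Equiv.Perm (Fin n),
    (∃ c ∈ L1, outputs [L1.erase c, L2] = permSet π (outputs [L1, L2])) ∨
    (∃ c ∈ L2, outputs [L1, L2.erase c] = permSet π (outputs [L1, L2]))

/-- A two-layer network `[L1, L2]` is saturated if it is non-redundant and no
comparator on two channels unused in the second layer can be added to the second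
layer so as to make the output set a proper subset of a permutation of the
original output set. -/
def Saturated {n : ℕ} (L1 L2 : Layer n) : Prop :=
  ¬ Redundant L1 L2 ∧
  ¬ ∃ (c : Comp n) (π : Equiv.Perm (Fin n)),
      c.1 < c.2 ∧ ¬ usedIn L2 c.1 ∧ ¬ usedIn L2 c.2 ∧
      outputs [L1, insert c L2] ⊂ permSet π (outputs [L1, L2])

/-- Vertices of the graph representation of `C`: the comparators of `C`,
tagged with the index of the layer containing them. -/
def Vertex {n : ℕ} (C : Net n) := {p : ℕ × Comp n // p.2 ∈ C.getD p.1 ∅}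

/-- The channel carrying the min output (`b = false`, label 1) or max output
(`b = true`, label 2) of a comparator. -/
def outChan {n : ℕ} (c : Comp n) (b : Bool) : Fin n := if b then c.2 else c.1

/-- An edge with label `b` (1 for min, 2 for max) from comparator `u` to
comparator `v`: the corresponding output of `u` is an input of `v`, i.e. `v`
is the next comparator on that channel. -/
def Edge {n : ℕ} (C : Net n) (b : Bool) (u v : ℕ × Comp n) : Prop :=
  u.1 < v.1 ∧ (outChan u.2 b = v.2.1 ∨ outChan u.2 b = v.2.2) ∧
  ∀ m, u.1 < m → m < v.1 → ¬ usedIn (C.getD m ∅) (outChan u.2 b)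

/-- The graph representations of `C` and `D` are isomorphic: a bijection of
comparators preserving the labeled edges. -/
def GraphIso {n m : ℕ} (C : Net n) (D : Net m) : Prop :=
  ∃ f : Vertex C ≃ Vertex D,
    ∀ (b : Bool) (u v : Vertex C),
      Edge C b u.val v.val ↔ Edge D b (f u).val (f v).val

/-- The graph representation of `C` is connected. -/
def GraphConnected {n : ℕ} (C : Net n) : Prop :=
  ∀ u v : Vertex C,
    Relation.ReflTransGen
      (fun a b : Vertex C => ∃ ℓ : Bool, Edge C ℓ a.val b.val ∨ Edge C ℓ b.val a.val) u v

/-- Reflection of a comparator: `(i,j) ↦ (n-j+1, n-i+1)` (in 1-based terms). -/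
def reflectComp {n : ℕ} (c : Comp n) : Comp n := (c.2.rev, c.1.rev)

def reflectLayer {n : ℕ} (L : Layer n) : Layer n := L.image reflectComp

/-- Reflection `C^R` of a comparator network. -/
def reflect {n : ℕ} (C : Net n) : Net n := C.map reflectLayer

/-- The first layer `F_n = {(2i-1, 2i) : 1 ≤ i ≤ ⌊n/2⌋}` (0-indexed: `(2i, 2i+1)`). -/
def FLayer (n : ℕ) : Layer n :=
  Finset.univ.filter fun c : Comp n => c.1.val % 2 = 0 ∧ c.2.val = c.1.val + 1

/-- The two-layer networks with first layer `F_n`, parametrized by second layer. -/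
def SecondLayers (n : ℕ) := {L : Layer n // IsLayer L}

/-- The number `|R(G_n)|` of equivalence classes of two-layer networks with
first layer `F_n`, under graph isomorphism `≈`. -/
noncomputable def numClasses (n : ℕ) : ℕ :=
  Nat.card (Quot fun L L' : SecondLayers n =>
    GraphIso ([FLayer n, L.val] : Net n) ([FLayer n, L'.val] : Net n))

/-- Redundant two-layer networks with first layer `F_n`. -/
def RedLayers (n : ℕ) := {L : Layer n // IsLayer L ∧ Redundant (FLayer n) L}

/-- The number of equivalence classes of redundant two-layer networks with
first layer `F_n`, under graph isomorphism `≈`. -/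
noncomputable def numRedClasses (n : ℕ) : ℕ :=
  Nat.card (Quot fun L L' : RedLayers n =>
    GraphIso ([FLayer n, L.val] : Net n) ([FLayer n, L'.val] : Net n))


/-!
Adding comparators to the first layer of a sorting network keeps it sorting, since they act
before that layer; so the first layer may be assumed maximal. Any two maximal layers are
conjugate under a relabelling `π` of the channels. Relabelling the rest of the network by `π`
may reverse some comparators; Knuth's untangling reorients them layer by layer, at the cost of
permuting the outputs by some `σ`. The resulting standard network fixes sorted vectors, which
forces `σ` to fix every output of the original network, so the new network sorts.
-/

variable {n : ℕ}

theorem IsLayer.isGenLayer {L : Layer n} (h : IsLayer L) : IsGenLayer L :=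
  ⟨fun c hc => (h.1 c hc).ne, h.2⟩

theorem isNet_cons {L : Layer n} {C : Net n} : IsNet (L :: C) ↔ IsLayer L ∧ IsNet C :=
  List.forall_mem_cons

theorem IsNet.isGenNet {C : Net n} (h : IsNet C) : IsGenNet C :=
  fun L hL => (h L hL).isGenLayer

@[simp] theorem outChan_false (c : Comp n) : outChan c false = c.1 := rfl

@[simp] theorem outChan_true (c : Comp n) : outChan c true = c.2 := rfl

theorem usedIn_iff {L : Layer n} {k : Fin n} :
    usedIn L k ↔ ∃ c ∈ L, ∃ b, outChan c b = k := by
  constructor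
  · rintro ⟨c, hc, h | h⟩
    exacts [⟨c, hc, false, h⟩, ⟨c, hc, true, h⟩]
  · rintro ⟨c, hc, (_ | _), rfl⟩
    exacts [⟨c, hc, Or.inl rfl⟩, ⟨c, hc, Or.inr rfl⟩]

theorem usedIn_outChan {L : Layer n} {c : Comp n} (hc : c ∈ L) (b : Bool) :
    usedIn L (outChan c b) :=
  usedIn_iff.2 ⟨c, hc, b, rfl⟩

theorem usedIn_mono {A L : Layer n} (h : A ⊆ L) {k : Fin n} : usedIn A k → usedIn L k :=
  fun ⟨c, hc, hk⟩ => ⟨c, h hc, hk⟩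

theorem noOverlap_iff {L : Layer n} :
    NoOverlap L ↔
      ∀ c ∈ L, ∀ c' ∈ L, c ≠ c' → ∀ b b', outChan c b ≠ outChan c' b' := by
  refine forall₂_congr fun c _ => forall₂_congr fun c' _ => imp_congr_right fun _ => ?_
  simp only [Bool.forall_bool, outChan_false, outChan_true]
  tauto

theorem applyLayer_of_not_usedIn {L : Layer n} {k : Fin n} (hk : ¬ usedIn L k)
    (x : Fin n → Bool) : applyLayer L x k = x k := by
  have h1 : ¬ ∃ c ∈ L, c.1 = k := fun ⟨c, hc, h⟩ => hk ⟨c, hc, Or.inl h⟩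
  have h2 : ¬ ∃ c ∈ L, c.2 = k := fun ⟨c, hc, h⟩ => hk ⟨c, hc, Or.inr h⟩
  rw [applyLayer, dif_neg h1, dif_neg h2]

theorem run_cons (L : Layer n) (C : Net n) (x : Fin n → Bool) :
    run (L :: C) x = run C (applyLayer L x) := rfl

theorem permVec_permVec (σ τ : Equiv.Perm (Fin n)) (x : Fin n → Bool) :
    permVec τ (permVec σ x) = permVec (σ.trans τ) x := rfl

namespace IsGenLayer

variable {L : Layer n}

theorem mono {A : Layer n} (hL : IsGenLayer L) (h : A ⊆ L) : IsGenLayer A :=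
  ⟨fun c hc => hL.1 c (h hc), fun c hc c' hc' => hL.2 c (h hc) c' (h hc')⟩

theorem eq_of_outChan_eq (hL : IsGenLayer L) {c c' : Comp n} (hc : c ∈ L) (hc' : c' ∈ L)
    {b b' : Bool} (h : outChan c b = outChan c' b') : c = c' ∧ b = b' := by
  by_cases hcc : c = c'
  · subst hcc
    have := hL.1 c hc
    cases b <;> cases b' <;> simp_all [eq_comm]
  · have := hL.2 c hc c' hc' hcc
    cases b <;> cases b' <;> simp_all

theorem not_usedIn_outChan {A : Layer n} (hL : IsGenLayer L) (hA : A ⊆ L) {c : Comp n}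
    (hc : c ∈ L) (hcA : c ∉ A) (b : Bool) : ¬ usedIn A (outChan c b) := by
  intro hu
  obtain ⟨c', hc', b', h⟩ := usedIn_iff.1 hu
  exact hcA ((hL.eq_of_outChan_eq (hA hc') hc h).1 ▸ hc')

theorem applyLayer_outChan (hL : IsGenLayer L) {c : Comp n} (hc : c ∈ L) (b : Bool)
    (x : Fin n → Bool) :
    applyLayer L x (outChan c b) = if b then x c.1 || x c.2 else x c.1 && x c.2 := by
  cases b
  · have h1 : ∃ c' ∈ L, c'.1 = c.1 := ⟨c, hc, rfl⟩
    have he : h1.choose = c :=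
      (hL.eq_of_outChan_eq h1.choose_spec.1 hc (b := false) (b' := false) h1.choose_spec.2).1
    simp only [outChan_false, applyLayer, dif_pos h1, he]
    rfl
  · have h1 : ¬ ∃ c' ∈ L, c'.1 = c.2 := fun ⟨c', hc', h⟩ =>
      Bool.false_ne_true (hL.eq_of_outChan_eq hc' hc (b := false) (b' := true) h).2
    have h2 : ∃ c' ∈ L, c'.2 = c.2 := ⟨c, hc, rfl⟩
    have he : h2.choose = c :=
      (hL.eq_of_outChan_eq h2.choose_spec.1 hc (b := true) (b' := true) h2.choose_spec.2).1
    simp only [outChan_true, applyLayer, dif_neg h1, dif_pos h2, he]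
    rfl

noncomputable def usedEquiv (hL : IsGenLayer L) : {c // c ∈ L} × Bool ≃ {k // usedIn L k} :=
  Equiv.ofBijective (fun p => ⟨outChan p.1 p.2, usedIn_outChan p.1.2 p.2⟩)
    ⟨fun p q h => by
      obtain ⟨hc, hb⟩ := hL.eq_of_outChan_eq p.1.2 q.1.2 (congrArg Subtype.val h)
      exact Prod.ext (Subtype.ext hc) hb,
    fun k => by
      obtain ⟨c, hc, b, hk⟩ := usedIn_iff.1 k.2
      exact ⟨(⟨c, hc⟩, b), Subtype.ext hk⟩⟩

@[simp] theorem usedEquiv_apply (hL : IsGenLayer L) (p : {c // c ∈ L} × Bool) :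
    (hL.usedEquiv p : Fin n) = outChan p.1 p.2 := rfl

theorem usedEquiv_symm_outChan (hL : IsGenLayer L) {c : Comp n} (hc : c ∈ L) (b : Bool) :
    hL.usedEquiv.symm ⟨outChan c b, usedIn_outChan hc b⟩ = (⟨c, hc⟩, b) :=
  hL.usedEquiv.symm_apply_eq.2 rfl

theorem card_usedIn (hL : IsGenLayer L) : Fintype.card {k // usedIn L k} = 2 * L.card := by
  rw [← Fintype.card_congr hL.usedEquiv]
  simp [mul_comm]

theorem two_mul_card_le (hL : IsGenLayer L) : 2 * L.card ≤ n :=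
  hL.card_usedIn ▸ (Fintype.card_subtype_le _).trans_eq (Fintype.card_fin n)

theorem permLayer (hL : IsGenLayer L) (π : Equiv.Perm (Fin n)) :
    IsGenLayer (SN.permLayer π L) := by
  refine ⟨?_, ?_⟩
  · simp only [SN.permLayer, Finset.mem_image]
    rintro _ ⟨c, hc, rfl⟩
    exact π.injective.ne (hL.1 c hc)
  · simp only [NoOverlap, SN.permLayer, Finset.mem_image]
    rintro _ ⟨c, hc, rfl⟩ _ ⟨c', hc', rfl⟩ hne
    have hcc : c ≠ c' := fun h => hne (h ▸ rfl)
    simpa only [ne_eq, π.injective.eq_iff] using hL.2 c hc c' hc' hcc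

end IsGenLayer

theorem applyLayer_permLayer {L : Layer n} (hL : IsGenLayer L) (π : Equiv.Perm (Fin n))
    (x : Fin n → Bool) :
    applyLayer (permLayer π L) (permVec π x) = permVec π (applyLayer L x) := by
  funext k
  obtain ⟨k, rfl⟩ := π.surjective k
  by_cases hk : usedIn L k
  · obtain ⟨c, hc, b, rfl⟩ := usedIn_iff.1 hk
    have hπc : (π c.1, π c.2) ∈ permLayer π L := Finset.mem_image_of_mem _ hc
    have h1 := hL.applyLayer_outChan hc b x
    have h2 := (hL.permLayer π).applyLayer_outChan hπc b (permVec π x)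
    cases b <;> simp only [outChan_false, outChan_true] at h1 h2 ⊢ <;> simp [permVec, h1, h2]
  · have hπk : ¬ usedIn (permLayer π L) (π k) := by
      simp only [usedIn, permLayer, Finset.mem_image]
      rintro ⟨_, ⟨c, hc, rfl⟩, h | h⟩
      exacts [hk ⟨c, hc, Or.inl (π.injective h)⟩, hk ⟨c, hc, Or.inr (π.injective h)⟩]
    simp [applyLayer_of_not_usedIn hπk, applyLayer_of_not_usedIn hk, permVec]

/-- Matching comparators and then their min- and max-channels gives the relabelling. -/
theorem exists_permLayer_eq {M L : Layer n} (hM : IsGenLayer M) (hL : IsGenLayer L)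
    (hcard : M.card = L.card) : ∃ π : Equiv.Perm (Fin n), permLayer π M = L := by
  let g : {c // c ∈ M} ≃ {c // c ∈ L} := Fintype.equivOfCardEq (by simpa using hcard)
  let π := (hM.usedEquiv.symm.trans
    ((g.prodCongr (Equiv.refl Bool)).trans hL.usedEquiv)).extendSubtype
  have hπ : ∀ c (hc : c ∈ M) b, π (outChan c b) = outChan (g ⟨c, hc⟩).1 b := by
    intro c hc b
    simp [π, Equiv.extendSubtype_apply_of_mem _ _ (usedIn_outChan hc b),
      hM.usedEquiv_symm_outChan hc]
  refine ⟨π, Finset.eq_of_subset_of_card_le ?_ ?_⟩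
  · simp only [permLayer, Finset.subset_iff, Finset.mem_image]
    rintro _ ⟨c, hc, rfl⟩
    have h1 := hπ c hc false
    have h2 := hπ c hc true
    simp only [outChan_false, outChan_true] at h1 h2
    rw [h1, h2]
    exact (g ⟨c, hc⟩).2
  · rw [permLayer, Finset.card_image_of_injective _ fun c c' h => by
      simpa [Prod.ext_iff] using h, hcard]

def orientComp (c : Comp n) : Comp n := if c.2 < c.1 then (c.2, c.1) else c

def orientLayer (L : Layer n) : Layer n := L.image orientComp

theorem outChan_orientComp (c : Comp n) (b : Bool) :
    outChan (orientComp c) b = outChan c (b ^^ decide (c.2 < c.1)) := by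
  unfold orientComp
  split_ifs with h <;> cases b <;> simp [h]

theorem usedIn_of_usedIn_orientLayer {L : Layer n} {k : Fin n}
    (hk : usedIn (orientLayer L) k) : usedIn L k := by
  obtain ⟨_, hc', b, rfl⟩ := usedIn_iff.1 hk
  obtain ⟨c, hc, rfl⟩ := Finset.mem_image.1 hc'
  rw [outChan_orientComp]
  exact usedIn_outChan hc _

namespace IsGenLayer

variable {L : Layer n}

theorem isLayer_orientLayer (hL : IsGenLayer L) : IsLayer (orientLayer L) := by
  refine ⟨?_, noOverlap_iff.2 ?_⟩
  · simp only [orientLayer, Finset.mem_image]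
    rintro _ ⟨c, hc, rfl⟩
    unfold orientComp
    split_ifs with h
    exacts [h, lt_of_le_of_ne (not_lt.1 h) (hL.1 c hc)]
  · simp only [orientLayer, Finset.mem_image]
    rintro _ ⟨c, hc, rfl⟩ _ ⟨c', hc', rfl⟩ hne b b'
    rw [outChan_orientComp, outChan_orientComp]
    exact noOverlap_iff.1 hL.2 c hc c' hc' (fun h => hne (h ▸ rfl)) _ _

/-- Swaps the two channels of every comparator of `L` that `orientComp` reverses. -/
noncomputable def orientFlip (hL : IsGenLayer L) (k : Fin n) : Fin n :=
  if hk : usedIn L k then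
    let p := hL.usedEquiv.symm ⟨k, hk⟩
    outChan (orientComp p.1) p.2
  else k

theorem orientFlip_outChan (hL : IsGenLayer L) {c : Comp n} (hc : c ∈ L) (b : Bool) :
    hL.orientFlip (outChan c b) = outChan (orientComp c) b := by
  simp [orientFlip, usedIn_outChan hc, hL.usedEquiv_symm_outChan hc]

theorem orientFlip_involutive (hL : IsGenLayer L) : Function.Involutive hL.orientFlip := by
  intro k
  by_cases hk : usedIn L k
  · obtain ⟨c, hc, b, rfl⟩ := usedIn_iff.1 hk
    simp [hL.orientFlip_outChan hc, outChan_orientComp]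
  · simp [orientFlip, hk]

theorem applyLayer_orientLayer (hL : IsGenLayer L) (x : Fin n → Bool) :
    applyLayer (orientLayer L) x =
      permVec hL.orientFlip_involutive.toPerm (applyLayer L x) := by
  have key : ∀ k, applyLayer (orientLayer L) x (hL.orientFlip k) = applyLayer L x k := by
    intro k
    by_cases hk : usedIn L k
    · obtain ⟨c, hc, b, rfl⟩ := usedIn_iff.1 hk
      rw [hL.orientFlip_outChan hc, hL.isLayer_orientLayer.isGenLayer.applyLayer_outChan
        (Finset.mem_image_of_mem _ hc), hL.applyLayer_outChan hc]
      unfold orientComp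
      split_ifs <;> cases b <;> simp [Bool.and_comm, Bool.or_comm]
    · have hk' : ¬ usedIn (orientLayer L) k := fun h => hk (usedIn_of_usedIn_orientLayer h)
      simp [orientFlip, hk, applyLayer_of_not_usedIn hk, applyLayer_of_not_usedIn hk']
  funext k
  simpa [permVec, hL.orientFlip_involutive k] using key (hL.orientFlip k)

end IsGenLayer

/-- Knuth's untangling of a generalized comparator network. -/
theorem IsGenNet.exists_isNet_run_permVec {G : Net n} (hG : IsGenNet G)
    (σ : Equiv.Perm (Fin n)) :
    ∃ (D : Net n) (σ' : Equiv.Perm (Fin n)), IsNet D ∧ D.length = G.length ∧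
      ∀ x, run D (permVec σ x) = permVec σ' (run G x) := by
  induction G generalizing σ with
  | nil => exact ⟨[], σ, List.forall_mem_nil _, rfl, fun _ => rfl⟩
  | cons M G ih =>
    obtain ⟨hM, hG⟩ := List.forall_mem_cons.1 hG
    have hσM := hM.permLayer σ
    obtain ⟨D, σ', hD, hlen, hrun⟩ := ih hG (σ.trans hσM.orientFlip_involutive.toPerm)
    refine ⟨orientLayer (permLayer σ M) :: D, σ',
      isNet_cons.2 ⟨hσM.isLayer_orientLayer, hD⟩, by simp [hlen], fun x => ?_⟩
    rw [run_cons, run_cons, hσM.applyLayer_orientLayer, applyLayer_permLayer hM,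
      permVec_permVec, hrun]

theorem applyLayer_eq_applyLayer_sdiff {A L : Layer n} (hL : IsGenLayer L) (hA : A ⊆ L)
    (x : Fin n → Bool) : applyLayer L x = applyLayer A (applyLayer (L \ A) x) := by
  have hB : L \ A ⊆ L := Finset.sdiff_subset
  funext k
  by_cases hk : usedIn L k
  · obtain ⟨c, hc, b, rfl⟩ := usedIn_iff.1 hk
    by_cases hcA : c ∈ A
    · have hcB : c ∉ L \ A := fun h => (Finset.mem_sdiff.1 h).2 hcA
      have h1 := applyLayer_of_not_usedIn (hL.not_usedIn_outChan hB hc hcB false) x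
      have h2 := applyLayer_of_not_usedIn (hL.not_usedIn_outChan hB hc hcB true) x
      simp only [outChan_false, outChan_true] at h1 h2
      rw [hL.applyLayer_outChan hc, (hL.mono hA).applyLayer_outChan hcA, h1, h2]
    · rw [applyLayer_of_not_usedIn (hL.not_usedIn_outChan hA hc hcA b),
        hL.applyLayer_outChan hc,
        (hL.mono hB).applyLayer_outChan (Finset.mem_sdiff.2 ⟨hc, hcA⟩)]
  · rw [applyLayer_of_not_usedIn hk, applyLayer_of_not_usedIn (hk ∘ usedIn_mono hA),
      applyLayer_of_not_usedIn (hk ∘ usedIn_mono hB)]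

theorem IsSortingNet.cons_of_subset {M M' : Layer n} {C : Net n}
    (hC : IsSortingNet (M :: C)) (hMM' : M ⊆ M') (hM' : IsLayer M') :
    IsSortingNet (M' :: C) := by
  refine ⟨isNet_cons.2 ⟨hM', (isNet_cons.1 hC.1).2⟩, fun x => ?_⟩
  rw [run_cons, applyLayer_eq_applyLayer_sdiff hM'.isGenLayer hMM']
  exact hC.2 _

theorem IsLayer.insert {L : Layer n} (hL : IsLayer L) {i j : Fin n} (hij : i < j)
    (hi : ¬ usedIn L i) (hj : ¬ usedIn L j) : IsLayer (insert (i, j) L) := by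
  have hnew : ∀ c ∈ L, ∀ b b', outChan (i, j) b ≠ outChan c b' := by
    rintro c hc (_ | _) b' h
    exacts [hi ((show i = _ from h) ▸ usedIn_outChan hc b'),
      hj ((show j = _ from h) ▸ usedIn_outChan hc b')]
  refine ⟨?_, noOverlap_iff.2 ?_⟩
  · simpa only [Finset.mem_insert, forall_eq_or_imp] using ⟨hij, hL.1⟩
  · simp only [Finset.mem_insert]
    rintro c (rfl | hc) c' (rfl | hc') hne b b'
    · exact absurd rfl hne
    · exact hnew c' hc' b b'
    · exact (hnew c hc b' b).symm
    · exact noOverlap_iff.1 hL.2 c hc c' hc' hne b b'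

theorem IsLayer.exists_superset_card_eq {M : Layer n} (hM : IsLayer M) :
    ∃ M', M ⊆ M' ∧ IsLayer M' ∧ M'.card = n / 2 := by
  induction h : n / 2 - M.card generalizing M with
  | zero => exact ⟨M, subset_rfl, hM, by have := hM.isGenLayer.two_mul_card_le; omega⟩
  | succ k ih =>
    obtain ⟨i, j, hij, hi, hj⟩ : ∃ i j, i < j ∧ ¬ usedIn M i ∧ ¬ usedIn M j := by
      have : 1 < Fintype.card {k // ¬ usedIn M k} := by
        rw [Fintype.card_subtype_compl, hM.isGenLayer.card_usedIn, Fintype.card_fin]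
        omega
      obtain ⟨⟨a, ha⟩, ⟨b, hb⟩, hab⟩ := Fintype.one_lt_card_iff.1 this
      rcases lt_or_gt_of_ne (Subtype.coe_ne_coe.2 hab) with hlt | hlt
      exacts [⟨a, b, hlt, ha, hb⟩, ⟨b, a, hlt, hb, ha⟩]
    have hnot : (i, j) ∉ M := fun hm => hi (usedIn_outChan hm false)
    obtain ⟨M', hsub, hM', hcard⟩ :=
      ih (hM.insert hij hi hj) (by rw [Finset.card_insert_of_notMem hnot]; omega)
    exact ⟨M', (Finset.subset_insert _ _).trans hsub, hM', hcard⟩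

theorem IsLayer.applyLayer_eq_self {L : Layer n} (hL : IsLayer L) {x : Fin n → Bool}
    (hx : Monotone x) : applyLayer L x = x := by
  funext k
  by_cases hk : usedIn L k
  · obtain ⟨c, hc, b, rfl⟩ := usedIn_iff.1 hk
    have hle := hx (hL.1 c hc).le
    rw [hL.isGenLayer.applyLayer_outChan hc]
    revert hle
    cases b <;> simp only [outChan_false, outChan_true] <;>
      cases x c.1 <;> cases x c.2 <;> decide
  · exact applyLayer_of_not_usedIn hk x

theorem IsNet.run_eq_self {C : Net n} (hC : IsNet C) {x : Fin n → Bool} (hx : Monotone x) :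
    run C x = x := by
  induction C with
  | nil => rfl
  | cons L C ih =>
    obtain ⟨hL, hC⟩ := isNet_cons.1 hC
    rw [run_cons, hL.applyLayer_eq_self hx, ih hC]

theorem IsNet.isSortingNet_of_run_permVec {N G : Net n} (hN : IsNet N)
    (hG : ∀ x, BSorted (run G x)) {π σ : Equiv.Perm (Fin n)}
    (h : ∀ x, run N (permVec π x) = permVec σ (run G x)) : IsSortingNet N := by
  refine ⟨hN, fun y => ?_⟩
  obtain ⟨x, rfl⟩ : ∃ x, permVec π x = y :=
    ⟨permVec π.symm y, by rw [permVec_permVec, Equiv.symm_trans_self]; rfl⟩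
  rw [h]
  have hs : Monotone (run G x) := hG x
  generalize run G x = s at hs ⊢
  -- `N` fixes the sorted `s`, so `s` is a permutation of a sorted output `t` of `G`,
  -- and two sorted permutations of the same vector agree.
  set t := run G (permVec π.symm s)
  have hts : permVec σ t = s := by
    rw [← h, permVec_permVec, Equiv.symm_trans_self]
    exact hN.run_eq_self hs
  have hσt : permVec σ t = t :=
    Tuple.unique_monotone (f := t) (σ := σ.symm) (τ := 1)
      (show Monotone (permVec σ t) from hts ▸ hs) (hG _)
  rw [← hts, hσt, hσt]
  exact hG _

/-- if `L` is a maximal layer on n channels and there is a sorting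
network of depth d ≥ 1, then there is one of depth d whose first layer is `L`. -/
theorem first_layer_can_be_fixed {n d : ℕ} (L : Layer n)
    (hL : IsLayer L) (hmax : L.card = n / 2) (hd : 1 ≤ d)
    (h : ∃ C : Net n, C.length = d ∧ IsSortingNet C) :
    ∃ rest : Net n, (L :: rest).length = d ∧ IsSortingNet (L :: rest) := by
  obtain ⟨C, hlen, hC⟩ := h
  obtain ⟨M, C, rfl⟩ := List.exists_cons_of_length_pos (by omega : 0 < C.length)
  obtain ⟨M', hMM', hM', hcard⟩ := (hC.1 M List.mem_cons_self).exists_superset_card_eq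
  have hC' := hC.cons_of_subset hMM' hM'
  obtain ⟨π, hπ⟩ := exists_permLayer_eq hM'.isGenLayer hL.isGenLayer (hcard.trans hmax.symm)
  obtain ⟨D, σ, hD, hDlen, hrun⟩ := (isNet_cons.1 hC.1).2.isGenNet.exists_isNet_run_permVec π
  refine ⟨D, by simpa [hDlen] using hlen, ?_⟩
  refine (isNet_cons.2 ⟨hL, hD⟩).isSortingNet_of_run_permVec hC'.2 (π := π) (σ := σ)
    fun x => ?_
  rw [run_cons, ← hπ, applyLayer_permLayer hM'.isGenLayer, hrun, run_cons]

end SN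
end

section
/- Let C = P;S be a sorting network on n channels of depth d, and let Q be a comparator network on n channels such that P and Q have the same depth and outputs(Q) ⊆ outputs(P). Then Q;S is a sorting network on n channels of depth d. -/
namespace SN

open scoped Classical

/-- if `P;S` is a sorting network of depth d and `Q` has the same
depth as `P` with `outputs(Q) ⊆ outputs(P)`, then `Q;S` is a sorting network of
depth d. -/
theorem subsumption {n : ℕ} (P S Q : Net n)
    (hPS : IsSortingNet (P ++ S)) (hQ : IsNet Q)
    (hdepth : Q.length = P.length)
    (hsub : outputs Q ⊆ outputs P) :
    IsSortingNet (Q ++ S) ∧ (Q ++ S).length = (P ++ S).length := by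
  have hrun : ∀ (A B : Net n) (x : Fin n → Bool),
      run (A ++ B) x = run B (run A x) := by
    intro A B x
    simp [run, List.foldl_append]
  refine ⟨⟨?_, ?_⟩, by simp [hdepth]⟩
  · intro L hL
    rcases List.mem_append.mp hL with h | h
    · exact hQ L h
    · exact hPS.1 L (List.mem_append.mpr (Or.inr h))
  · intro x
    obtain ⟨y, hy⟩ := hsub ⟨x, rfl⟩
    have : run (Q ++ S) x = run (P ++ S) y := by
      rw [hrun, hrun, hy]
    rw [this]
    exact hPS.2 y

end SN
end
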